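/- Let γ be a signpost sequence, h ≥ 1 a house size, and let Q, Q' ∈ ℝ₊ⁿ be vote vectors with strictly positive entries such that Q_p > Q'_p for some party p and Q_i = Q'_i for every i ≠ p. Then for every J ∈ A_γ(Q, h) there exists J' ∈ A_γ(Q', h) such that J_p ≥ J'_p and J_i ≤ J'_i for every i ≠ p. -/

import Mathlib

open Finset

/-- A signpost sequence: `γ 0 = 0`, `γ n ∈ [n-1, n]` for `n ≥ 1`, and the
disjunction property. -/
def Signpost (γ : ℕ → ℝ) : Prop :=
  γ 0 = 0 ∧
  (∀ n : ℕ, 1 ≤ n → ((n : ℝ) - 1 ≤ γ n ∧ γ n ≤ n)) ∧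
  ((∃ k : ℕ, 2 ≤ k ∧ γ k = (k : ℝ) - 1) → ∀ l : ℕ, 1 ≤ l → γ l < l) ∧
  ((∃ k : ℕ, 1 ≤ k ∧ γ k = (k : ℝ)) → ∀ l : ℕ, 2 ≤ l → (l : ℝ) - 1 < γ l)

/-- The rounding rule `R_γ` of a signpost sequence, as a set-valued map:
`R_γ(0) = {0}`, `R_γ(t) = {n}` for `t ∈ (γ n, γ (n+1))`, and
`R_γ(t) = {n-1, n}` when `t = γ n > 0`. -/
def roundSet (γ : ℕ → ℝ) (t : ℝ) : Set ℕ :=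
  {k | (t = 0 ∧ k = 0) ∨ (γ k < t ∧ t < γ (k + 1)) ∨ (0 < t ∧ (t = γ k ∨ t = γ (k + 1)))}

/-- The divisor method solution set `A_γ(Q, h)`. -/
def divisorSet (γ : ℕ → ℝ) {n : ℕ} (Q : Fin n → ℝ) (h : ℕ) : Set (Fin n → ℕ) :=
  {S | (∑ i, S i) = h ∧ ∃ lam : ℝ, 0 < lam ∧ ∀ i, S i ∈ roundSet γ (Q i / lam)}

/-- The two candidate types. -/
inductive MType
  | f | m
deriving DecidableEq

instance : Fintype MType where
  elems := {MType.f, MType.m}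
  complete := fun x => by cases x <;> simp

/-- The other type. -/
def MType.other : MType → MType
  | .f => .m
  | .m => .f

/-- An instance of the apportionment problem with type parity: a finite candidate
set `C`, a party map, a (nonnegative real) vote map, a type map, a house size
`h ≥ 1` and a total order (the field `ord`) refining the votes. -/
structure TypedInstance (n : ℕ) (C : Type) [Fintype C] [DecidableEq C] where
  ord : LinearOrder C
  party : C → Fin n
  votes : C → ℝ
  votes_nonneg : ∀ c, 0 ≤ votes c
  mtype : C → MType
  h : ℕ
  h_pos : 1 ≤ h
  refines : ∀ c c' : C, votes c' < votes c → ord.lt c' c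

namespace TypedInstance

variable {n : ℕ} {C : Type} [Fintype C] [DecidableEq C]

/-- The candidates of party `i`. -/
def Ci (I : TypedInstance n C) (i : Fin n) : Finset C :=
  univ.filter fun c => I.party c = i

/-- The candidates of type `t`. -/
def Ct (I : TypedInstance n C) (t : MType) : Finset C :=
  univ.filter fun c => I.mtype c = t

/-- The candidates of party `i` and type `t`. -/
def Cit (I : TypedInstance n C) (i : Fin n) (t : MType) : Finset C :=
  univ.filter fun c => I.party c = i ∧ I.mtype c = t

/-- The party vote totals `Q(I)`. -/
def Q (I : TypedInstance n C) : Fin n → ℝ := fun i => ∑ c ∈ I.Ci i, I.votes c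

/-- The party × type vote totals `P(I)`. -/
def P (I : TypedInstance n C) : Fin n → MType → ℝ := fun i t => ∑ c ∈ I.Cit i t, I.votes c

/-- The supply matrix `S(I)`. -/
def S (I : TypedInstance n C) : Fin n → MType → ℕ := fun i t => (I.Cit i t).card

/-- The supply condition: `|C_i^t| ≥ ⌈h/2⌉` for every party `i` and type `t`. -/
def SupplyCond (I : TypedInstance n C) : Prop :=
  ∀ (i : Fin n) (t : MType), (I.h + 1) / 2 ≤ (I.Cit i t).card

/-- Type parity condition (A): the numbers of elected candidates of the two types
differ by exactly `h mod 2`. Allocations are represented by the finset of elected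
candidates. -/
def CondA (I : TypedInstance n C) (E : Finset C) : Prop :=
  (((E.filter fun c => I.mtype c = MType.f).card : ℤ) -
    ((E.filter fun c => I.mtype c = MType.m).card : ℤ)).natAbs = I.h % 2

instance (I : TypedInstance n C) (E : Finset C) : Decidable (I.CondA E) := by
  unfold CondA; infer_instance

/-- The number of elected candidates of each party. -/
def partyCount (I : TypedInstance n C) (E : Finset C) : Fin n → ℕ :=
  fun i => (E.filter fun c => I.party c = i).card

/-- The number of elected candidates of each type. -/
def typeCount (I : TypedInstance n C) (E : Finset C) : MType → ℕ :=
  fun t => (E.filter fun c => I.mtype c = t).card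

/-- Party proportionality condition (B) w.r.t. a signpost sequence `γ`. -/
def CondB (I : TypedInstance n C) (γ : ℕ → ℝ) (E : Finset C) : Prop :=
  ∃ J ∈ divisorSet γ I.Q I.h, ∀ i, I.partyCount E i = J i

/-- The set `X(I, γ)` of feasible allocations. -/
def X (I : TypedInstance n C) (γ : ℕ → ℝ) : Set (Finset C) :=
  {E | I.CondA E ∧ I.CondB γ E}

/-- The polytope `Z(I, J, γ)` of fractional allocations. -/
def Z (I : TypedInstance n C) (J : Fin n → ℕ) : Set (Fin n → MType → ℝ) :=
  {y | (∀ t : MType, ((I.h / 2 : ℕ) : ℝ) ≤ ∑ i, y i t) ∧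
       (∀ i : Fin n, y i MType.f + y i MType.m = (J i : ℝ)) ∧
       (∀ (i : Fin n) (t : MType), 0 ≤ y i t ∧ y i t ≤ ((I.Cit i t).card : ℝ))}

/-- The scaled instance `αI` (same candidate order). -/
def scale (I : TypedInstance n C) (α : ℝ) (hα : 0 < α) : TypedInstance n C where
  ord := I.ord
  party := I.party
  votes := fun c => α * I.votes c
  votes_nonneg := fun c => mul_nonneg hα.le (I.votes_nonneg c)
  mtype := I.mtype
  h := I.h
  h_pos := I.h_pos
  refines := fun c c' hlt => I.refines c c' (lt_of_mul_lt_mul_left hlt hα.le)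

/-- `G` is a voting increment of `I` in candidate `c`: identical to `I` except
that `c` garners strictly more votes. -/
def VotingIncrement (I G : TypedInstance n C) (c : C) : Prop :=
  G.party = I.party ∧ G.mtype = I.mtype ∧ G.h = I.h ∧
  I.votes c < G.votes c ∧ ∀ c' : C, c' ≠ c → G.votes c' = I.votes c'

/-- The rank of a candidate in the order `≻`: position `1` is the top candidate. -/
def rank (I : TypedInstance n C) (c : C) : ℕ :=
  letI := I.ord
  (univ.filter fun c' => c ≤ c').card

/-- The top `k` candidates of a subset `D` according to the order of `I`. -/
def topOf (I : TypedInstance n C) (D : Finset C) (k : ℕ) : Finset C :=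
  letI := I.ord
  D.filter fun c => (D.filter fun c' => c ≤ c').card ≤ k

/-- The type-oblivious solution `T_J`: in every party `i`, the top `J i`
candidates of `C_i` are elected. -/
def oblivious (I : TypedInstance n C) (J : Fin n → ℕ) : Finset C :=
  univ.filter fun c => c ∈ I.topOf (I.Ci (I.party c)) (J (I.party c))

/-- The over-represented type of an allocation (type `f` in case of a tie). -/
def overType (I : TypedInstance n C) (E : Finset C) : MType :=
  if I.typeCount E MType.m ≤ I.typeCount E MType.f then MType.f else MType.m

/-- One parity-correction swap: the worst-ranked elected candidate of the
over-represented type is replaced by the best-ranked unelected candidate of the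
same party and of the under-represented type (if any; otherwise nothing happens). -/
def swapStep (I : TypedInstance n C) (E : Finset C) : Finset C :=
  letI := I.ord
  let t := I.overType E
  let elected := E.filter fun c => I.mtype c = t
  if hE : elected.Nonempty then
    let s := elected.min' hE
    let pool := univ.filter fun c => c ∉ E ∧ I.party c = I.party s ∧ I.mtype c = t.other
    if hp : pool.Nonempty then insert (pool.max' hp) (E.erase s) else E
  else E

/-- The parity-correction loop (with fuel). -/
def greedyAux (I : TypedInstance n C) : ℕ → Finset C → Finset C
  | 0, E => E
  | k + 1, E => if I.CondA E then E else greedyAux I k (I.swapStep E)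

/-- The output `E_J` of the greedy & parity correction algorithm. -/
def greedy (I : TypedInstance n C) (J : Fin n → ℕ) : Finset C :=
  greedyAux I I.h (I.oblivious J)

/-- The greedy & parity correction mechanism `M^G`. -/
def MG (I : TypedInstance n C) (γ : ℕ → ℝ) : Set (Finset C) :=
  {E | ∃ J ∈ divisorSet γ I.Q I.h, E = I.greedy J}

/-- Two allocations agree on all candidates of rank at most `l`. -/
def agreeUpTo (I : TypedInstance n C) (E₁ E₂ : Finset C) (l : ℕ) : Prop :=
  ∀ c : C, I.rank c ≤ l → (c ∈ E₁ ↔ c ∈ E₂)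

instance (I : TypedInstance n C) (E₁ E₂ : Finset C) (l : ℕ) :
    Decidable (I.agreeUpTo E₁ E₂ l) := by
  unfold agreeUpTo; infer_instance

/-- The length of the common prefix of two allocations (w.r.t. the ranking). -/
def prefixLen (I : TypedInstance n C) (E₁ E₂ : Finset C) : ℕ :=
  ((Finset.range (Fintype.card C + 1)).filter fun l => I.agreeUpTo E₁ E₂ l).sup id

/-- The vote-leading type (type `f` in case of a tie; this tie-breaking rule is
scaling invariant). -/
noncomputable def voteLeading (I : TypedInstance n C) : MType :=
  if (∑ c ∈ I.Ct MType.f, I.votes c) < (∑ c ∈ I.Ct MType.m, I.votes c) then MType.m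
  else MType.f

/-- The parity marginal `φ(I)`: for even `h` both types get `h/2`; for odd `h` the
vote-leading type gets `⌈h/2⌉`. -/
noncomputable def parityMarginal (I : TypedInstance n C) : MType → ℕ :=
  fun t => if t = I.voteLeading then (I.h + 1) / 2 else I.h / 2

end TypedInstance

/-- `(x, lam, mu)` is a `δ`-biproportional solution of the two-dimensional
instance with supply `(P, S, J, φ)`. -/
def IsBipropSol (δ : ℕ → ℝ) {n : ℕ} (P : Fin n → MType → ℝ) (S : Fin n → MType → ℕ)
    (J : Fin n → ℕ) (φ : MType → ℕ) (x : Fin n → MType → ℕ)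
    (lam : Fin n → ℝ) (mu : MType → ℝ) : Prop :=
  (∀ i, 0 < lam i) ∧ (∀ t, 0 < mu t) ∧
  (∀ (i : Fin n) (t : MType), x i t < S i t → x i t ∈ roundSet δ (P i t * lam i * mu t)) ∧
  (∀ i : Fin n, x i MType.f + x i MType.m = J i) ∧
  (∀ t : MType, (∑ i, x i t) = φ t) ∧
  (∀ (i : Fin n) (t : MType), x i t ≤ S i t)

/-- The set `B_δ(P, S, J, φ)` of `δ`-biproportional solutions. -/
def bipropSet (δ : ℕ → ℝ) {n : ℕ} (P : Fin n → MType → ℝ) (S : Fin n → MType → ℕ)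
    (J : Fin n → ℕ) (φ : MType → ℕ) : Set (Fin n → MType → ℕ) :=
  {x | ∃ lam mu, IsBipropSol δ P S J φ x lam mu}

/-- `δ`-biproportional solutions of a two-dimensional instance `(P, J, φ)`
without supply bounds. -/
def IsBipropSolNS (δ : ℕ → ℝ) {n : ℕ} (P : Fin n → MType → ℝ)
    (J : Fin n → ℕ) (φ : MType → ℕ) (x : Fin n → MType → ℕ)
    (lam : Fin n → ℝ) (mu : MType → ℝ) : Prop :=
  (∀ i, 0 < lam i) ∧ (∀ t, 0 < mu t) ∧
  (∀ (i : Fin n) (t : MType), x i t ∈ roundSet δ (P i t * lam i * mu t)) ∧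
  (∀ i : Fin n, x i MType.f + x i MType.m = J i) ∧
  (∀ t : MType, (∑ i, x i t) = φ t)

/-- The set `B_δ(P, J, φ)` for instances without supply bounds. -/
def bipropSetNS (δ : ℕ → ℝ) {n : ℕ} (P : Fin n → MType → ℝ)
    (J : Fin n → ℕ) (φ : MType → ℕ) : Set (Fin n → MType → ℕ) :=
  {x | ∃ lam mu, IsBipropSolNS δ P J φ x lam mu}

/-- `F` is a fair share (matrix scaling) of the two-dimensional instance
`(P, J, φ)`. -/
def IsFairShare {n : ℕ} (P : Fin n → MType → ℝ) (J : Fin n → ℕ) (φ : MType → ℕ)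
    (F : Fin n → MType → ℝ) : Prop :=
  ∃ (lam : Fin n → ℝ) (mu : MType → ℝ),
    (∀ i, 0 < lam i) ∧ (∀ t, 0 < mu t) ∧ (∀ i t, 0 < F i t) ∧
    (∀ (i : Fin n) (t : MType), F i t = P i t * lam i * mu t) ∧
    (∀ i : Fin n, F i MType.f + F i MType.m = (J i : ℝ)) ∧
    (∀ t : MType, (∑ i, F i t) = (φ t : ℝ))

namespace TypedInstance

variable {n : ℕ} {C : Type} [Fintype C] [DecidableEq C]

/-- The allocation `E_x` electing, for every party `i` and type `t`, the top
`x i t` candidates of `C_i^t`. -/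
def allocOf (I : TypedInstance n C) (x : Fin n → MType → ℕ) : Finset C :=
  univ.filter fun c =>
    c ∈ I.topOf (I.Cit (I.party c) (I.mtype c)) (x (I.party c) (I.mtype c))

/-- The `δ`-biproportional parity mechanism `M^B_δ`. -/
def MB (I : TypedInstance n C) (δ γ : ℕ → ℝ) : Set (Finset C) :=
  {E | ∃ J ∈ divisorSet γ I.Q I.h,
        ∃ x ∈ bipropSet δ I.P I.S J I.parityMarginal, E = I.allocOf x}

end TypedInstance

/-! Write `s = 1/λ` for the scale. A seat number `k` is a `γ`-rounding of `t = Q i * s > 0` exactly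
when `minRound γ t ≤ k ≤ maxRound γ t`, and both bounds are nondecreasing step functions of `s`.
At the scale `a` of `J`, lowering `Q p` keeps every `J i` feasible, except that party `p` may now
hold too many seats. Cap party `p` at `J p`, keep every other party at least at `J i`, and raise
the scale: the sum of the capped upper bounds reaches `h` by the scale at which `Q' p * s` equals
`γ (J p + 1)`. Right-continuity of `maxRound γ` makes the least such scale exist, and since
`minRound γ t ≤ maxRound γ t'` for all `t'` near `t`, the sum of the lower bounds there is at most
`h`. Distributing `h` seats between the two bounds gives `J'`. -/

open Filter Topology Set

theorem Signpost.monotone {γ : ℕ → ℝ} (hγ : Signpost γ) : Monotone γ := by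
  refine monotone_nat_of_le_succ fun k => ?_
  rcases Nat.eq_zero_or_pos k with rfl | hk
  · simpa [hγ.1] using (hγ.2.1 1 le_rfl).1
  · have h1 := (hγ.2.1 k hk).2
    have h2 := (hγ.2.1 (k + 1) (by omega)).1
    push_cast at h2
    linarith

theorem Signpost.tendsto_atTop {γ : ℕ → ℝ} (hγ : Signpost γ) : Tendsto γ atTop atTop := by
  refine tendsto_atTop_atTop.2 fun b => ⟨⌈b⌉₊ + 1, fun k hk => ?_⟩
  have h1 := (hγ.2.1 k (by omega)).1
  have h2 : (⌈b⌉₊ : ℝ) + 1 ≤ k := by exact_mod_cast hk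
  linarith [Nat.le_ceil b]

section Rounding

variable {γ : ℕ → ℝ} {t : ℝ} {k : ℕ}

/-- The largest element of `roundSet γ t` for `t > 0`. -/
noncomputable def maxRound (γ : ℕ → ℝ) (t : ℝ) : ℕ := sSup {k | γ k ≤ t}

/-- The smallest element of `roundSet γ t` for `t > 0`. -/
noncomputable def minRound (γ : ℕ → ℝ) (t : ℝ) : ℕ := sInf {k | t ≤ γ (k + 1)}

theorem mem_roundSet_iff_of_pos (hmono : Monotone γ) (ht : 0 < t) :
    k ∈ roundSet γ t ↔ γ k ≤ t ∧ t ≤ γ (k + 1) := by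
  have hk : γ k ≤ γ (k + 1) := hmono k.le_succ
  constructor
  · rintro (⟨rfl, -⟩ | ⟨h₁, h₂⟩ | ⟨-, rfl | rfl⟩)
    · exact absurd ht (lt_irrefl 0)
    · exact ⟨h₁.le, h₂.le⟩
    · exact ⟨le_rfl, hk⟩
    · exact ⟨hk, le_rfl⟩
  · rintro ⟨h₁, h₂⟩
    rcases h₁.lt_or_eq with h₁ | h₁
    · rcases h₂.lt_or_eq with h₂ | h₂
      · exact Or.inr (Or.inl ⟨h₁, h₂⟩)
      · exact Or.inr (Or.inr ⟨ht, Or.inr h₂⟩)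
    · exact Or.inr (Or.inr ⟨ht, Or.inl h₁.symm⟩)

theorem bddAbove_setOf_le (hmono : Monotone γ) (hγ : Tendsto γ atTop atTop) (t : ℝ) :
    BddAbove {k | γ k ≤ t} := by
  obtain ⟨K, hK⟩ := (hγ.eventually_gt_atTop t).exists
  exact ⟨K, fun k hk => (hmono.reflect_lt (lt_of_le_of_lt hk hK)).le⟩

theorem le_maxRound_iff (hmono : Monotone γ) (hγ : Tendsto γ atTop atTop) (ht : γ 0 ≤ t) :
    k ≤ maxRound γ t ↔ γ k ≤ t :=
  ⟨fun hk => (hmono hk).trans (Nat.sSup_mem ⟨0, ht⟩ (bddAbove_setOf_le hmono hγ t)),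
    fun hk => le_csSup (bddAbove_setOf_le hmono hγ t) hk⟩

theorem minRound_le_iff (hmono : Monotone γ) (hγ : Tendsto γ atTop atTop) :
    minRound γ t ≤ k ↔ t ≤ γ (k + 1) := by
  refine ⟨fun hk => ?_, fun hk => Nat.sInf_le hk⟩
  obtain ⟨K, hK⟩ := (hγ.eventually_ge_atTop t).exists
  exact (Nat.sInf_mem (s := {k | t ≤ γ (k + 1)}) ⟨K, hK.trans (hmono K.le_succ)⟩).trans
    (hmono (Nat.succ_le_succ hk))

theorem maxRound_mono (hmono : Monotone γ) (hγ : Tendsto γ atTop atTop) :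
    Monotone (maxRound γ) := by
  intro t t' htt'
  by_cases ht : γ 0 ≤ t
  · exact (le_maxRound_iff hmono hγ (ht.trans htt')).2
      (((le_maxRound_iff hmono hγ ht).1 le_rfl).trans htt')
  · have : {k | γ k ≤ t} = ∅ :=
      eq_empty_of_forall_notMem fun k hk => ht ((hmono k.zero_le).trans hk)
    simp [maxRound, this]

theorem minRound_mono (hmono : Monotone γ) (hγ : Tendsto γ atTop atTop) :
    Monotone (minRound γ) := fun _ _ htt' =>
  (minRound_le_iff hmono hγ).2 (htt'.trans ((minRound_le_iff hmono hγ).1 le_rfl))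

theorem eventually_maxRound_le (hmono : Monotone γ) (hγ : Tendsto γ atTop atTop) (ht : γ 0 < t) :
    ∀ᶠ t' in 𝓝 t, maxRound γ t' ≤ maxRound γ t := by
  have hlt : t < γ (maxRound γ t + 1) :=
    not_le.1 fun h => by simpa using (le_maxRound_iff hmono hγ ht.le).2 h
  filter_upwards [Ioo_mem_nhds ht hlt] with t' ht'
  by_contra! h
  exact (((le_maxRound_iff hmono hγ ht'.1.le).1 h).trans_lt ht'.2).false

theorem eventually_minRound_le_maxRound (hmono : Monotone γ) (hγ : Tendsto γ atTop atTop)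
    (ht : γ 0 < t) : ∀ᶠ t' in 𝓝 t, minRound γ t ≤ maxRound γ t' := by
  have hlt : γ (minRound γ t) < t := by
    rcases hm : minRound γ t with _ | m
    · exact ht
    · exact not_le.1 fun h => by simpa [hm] using (minRound_le_iff hmono hγ).2 h
  filter_upwards [Ioi_mem_nhds hlt] with t' ht'
  exact (le_maxRound_iff hmono hγ ((hmono (Nat.zero_le _)).trans ht'.le)).2 ht'.le

theorem mem_roundSet_iff (hmono : Monotone γ) (hγ : Tendsto γ atTop atTop) (hγ0 : γ 0 = 0)
    {t : ℝ} (ht : 0 < t) {k : ℕ} : k ∈ roundSet γ t ↔ minRound γ t ≤ k ∧ k ≤ maxRound γ t := by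
  rw [mem_roundSet_iff_of_pos hmono ht, minRound_le_iff hmono hγ,
    le_maxRound_iff hmono hγ (hγ0 ▸ ht.le), and_comm]

end Rounding

theorem mem_divisorSet_iff {γ : ℕ → ℝ} (hmono : Monotone γ) (hγ : Tendsto γ atTop atTop)
    (hγ0 : γ 0 = 0) {n : ℕ} {Q : Fin n → ℝ} (hQ : ∀ i, 0 < Q i) {h : ℕ} {J : Fin n → ℕ} :
    J ∈ divisorSet γ Q h ↔ ∑ i, J i = h ∧
      ∃ s > 0, ∀ i, minRound γ (Q i * s) ≤ J i ∧ J i ≤ maxRound γ (Q i * s) := by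
  refine and_congr_right fun _ => ⟨?_, ?_⟩
  · rintro ⟨lam, hlam, hJ⟩
    refine ⟨lam⁻¹, inv_pos.2 hlam, fun i => ?_⟩
    rw [← div_eq_mul_inv, ← mem_roundSet_iff hmono hγ hγ0 (div_pos (hQ i) hlam)]
    exact hJ i
  · rintro ⟨s, hs, hJ⟩
    refine ⟨s⁻¹, inv_pos.2 hs, fun i => ?_⟩
    rw [div_inv_eq_mul, mem_roundSet_iff hmono hγ hγ0 (mul_pos (hQ i) hs)]
    exact hJ i

theorem exists_mem_Icc_le_and_le {L U : ℝ → ℕ} {h : ℕ} {a b : ℝ} (hab : a ≤ b)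
    (hLa : L a ≤ h) (hUb : h ≤ U b) (hU : ∀ s ∈ Icc a b, ∀ᶠ s' in 𝓝 s, U s' ≤ U s)
    (hLU : ∀ s ∈ Icc a b, ∀ᶠ s' in 𝓝 s, s' ∈ Icc a b → L s ≤ U s') :
    ∃ s ∈ Icc a b, L s ≤ h ∧ h ≤ U s := by
  set A := {s | s ∈ Icc a b ∧ h ≤ U s}
  have hbA : b ∈ A := ⟨⟨hab, le_rfl⟩, hUb⟩
  have hAbdd : BddBelow A := ⟨a, fun s hs => hs.1.1⟩
  set c := sInf A
  have hc : c ∈ Icc a b := ⟨le_csInf ⟨b, hbA⟩ fun s hs => hs.1.1, csInf_le hAbdd hbA⟩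
  refine ⟨c, hc, ?_, ?_⟩
  · rcases hc.1.eq_or_lt with hac | hac
    · rwa [← hac]
    obtain ⟨s, hLs, has, hsc⟩ :=
      (((hLU c hc).filter_mono nhdsWithin_le_nhds).and (Ioo_mem_nhdsLT hac)).exists
    have hsA : s ∉ A := fun hs => not_lt.2 (csInf_le hAbdd hs) hsc
    have hs : s ∈ Icc a b := ⟨has.le, hsc.le.trans hc.2⟩
    exact (hLs hs).trans (not_le.1 fun hUs => hsA ⟨hs, hUs⟩).le
  · obtain ⟨u, hcu, hu⟩ :=
      mem_nhdsGE_iff_exists_Ico_subset.1 ((hU c hc).filter_mono nhdsWithin_le_nhds)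
    obtain ⟨s, hsA, hsu⟩ := exists_lt_of_csInf_lt ⟨b, hbA⟩ hcu
    exact hsA.2.trans (hu ⟨csInf_le hAbdd hsA, hsu⟩)

theorem Finset.exists_le_le_sum_eq {ι : Type*} [DecidableEq ι] {a b : ι → ℕ} (s : Finset ι)
    (hab : ∀ i ∈ s, a i ≤ b i) {h : ℕ} (ha : ∑ i ∈ s, a i ≤ h) (hb : h ≤ ∑ i ∈ s, b i) :
    ∃ c : ι → ℕ, (∀ i ∈ s, a i ≤ c i ∧ c i ≤ b i) ∧ ∑ i ∈ s, c i = h := by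
  induction s using Finset.induction_on generalizing h with
  | empty => exact ⟨a, by simp, by simpa using (Nat.le_zero.1 (by simpa using hb)).symm⟩
  | insert j s hj ih =>
    rw [sum_insert hj] at ha hb
    have habs : ∀ i ∈ s, a i ≤ b i := fun i hi => hab i (mem_insert_of_mem hi)
    have hsum : ∑ i ∈ s, a i ≤ ∑ i ∈ s, b i := sum_le_sum habs
    have habj := hab j (mem_insert_self j s)
    set x := min (b j) (h - ∑ i ∈ s, a i)
    obtain ⟨c, hc, hcs⟩ := ih habs (h := h - x) (by omega) (by omega)
    refine ⟨Function.update c j x, fun i hi => ?_, ?_⟩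
    · rcases mem_insert.1 hi with rfl | hi
      · simp only [Function.update_self]
        omega
      · simpa [Function.update_of_ne (ne_of_mem_of_not_mem hi hj)] using hc i hi
    · rw [sum_insert hj, Function.update_self, sum_update_of_notMem hj, hcs]
      omega

section Transfer

variable {ι : Type*} [DecidableEq ι] {γ : ℕ → ℝ} {Q : ι → ℝ} {p : ι} {J : ι → ℕ}

/-- Seat bounds at scale `s` for apportionments in which, compared with `J`, party `p` can only
lose seats and every other party can only gain. -/
noncomputable def lowerQuota (γ : ℕ → ℝ) (Q : ι → ℝ) (p : ι) (J : ι → ℕ) (s : ℝ) (i : ι) : ℕ :=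
  if i = p then minRound γ (Q i * s) else max (minRound γ (Q i * s)) (J i)

noncomputable def upperQuota (γ : ℕ → ℝ) (Q : ι → ℝ) (p : ι) (J : ι → ℕ) (s : ℝ) (i : ι) : ℕ :=
  if i = p then min (maxRound γ (Q i * s)) (J i) else maxRound γ (Q i * s)

theorem minRound_le_lowerQuota (s : ℝ) (i : ι) :
    minRound γ (Q i * s) ≤ lowerQuota γ Q p J s i := by
  unfold lowerQuota
  split_ifs
  exacts [le_rfl, le_max_left _ _]

theorem le_lowerQuota (s : ℝ) {i : ι} (hi : i ≠ p) : J i ≤ lowerQuota γ Q p J s i := by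
  simp [lowerQuota, hi]

theorem upperQuota_le_maxRound (s : ℝ) (i : ι) :
    upperQuota γ Q p J s i ≤ maxRound γ (Q i * s) := by
  unfold upperQuota
  split_ifs
  exacts [min_le_left _ _, le_rfl]

theorem upperQuota_self_le (s : ℝ) : upperQuota γ Q p J s p ≤ J p := by
  simp [upperQuota]

theorem eventually_upperQuota_le [Finite ι] (hmono : Monotone γ) (hγ : Tendsto γ atTop atTop)
    (hγ0 : γ 0 = 0) (hQ : ∀ i, 0 < Q i) {s : ℝ} (hs : 0 < s) :
    ∀ᶠ s' in 𝓝 s, upperQuota γ Q p J s' ≤ upperQuota γ Q p J s := by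
  refine eventually_all.2 fun i => ?_
  have hpos : γ 0 < Q i * s := hγ0 ▸ mul_pos (hQ i) hs
  filter_upwards [(tendsto_id.const_mul (Q i)).eventually
    (eventually_maxRound_le hmono hγ hpos)] with s' hs'
  unfold upperQuota
  split_ifs
  exacts [min_le_min_right _ hs', hs']

theorem eventually_lowerQuota_le_upperQuota [Finite ι] (hmono : Monotone γ)
    (hγ : Tendsto γ atTop atTop) (hγ0 : γ 0 = 0) (hQ : ∀ i, 0 < Q i) {a b s : ℝ} (ha : 0 < a)
    (hs : s ∈ Icc a b)
    (hpb : minRound γ (Q p * b) ≤ J p) (hup : ∀ i ≠ p, J i ≤ maxRound γ (Q i * a)) :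
    ∀ᶠ s' in 𝓝 s, s' ∈ Icc a b → lowerQuota γ Q p J s ≤ upperQuota γ Q p J s' := by
  have hall : ∀ᶠ s' in 𝓝 s, ∀ i, minRound γ (Q i * s) ≤ maxRound γ (Q i * s') :=
    eventually_all.2 fun i => (tendsto_id.const_mul (Q i)).eventually
      (eventually_minRound_le_maxRound hmono hγ (hγ0 ▸ mul_pos (hQ i) (ha.trans_le hs.1)))
  filter_upwards [hall] with s' hs' hs'ab i
  unfold lowerQuota upperQuota
  split_ifs with hi
  · subst hi
    exact le_min (hs' i) ((minRound_mono hmono hγ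
      (mul_le_mul_of_nonneg_left hs.2 (hQ i).le)).trans hpb)
  · exact max_le (hs' i) ((hup i hi).trans (maxRound_mono hmono hγ
      (mul_le_mul_of_nonneg_left hs'ab.1 (hQ i).le)))

theorem exists_rounding_of_excess [Fintype ι] (hmono : Monotone γ) (hγ : Tendsto γ atTop atTop)
    (hγ0 : γ 0 = 0) (hQ : ∀ i, 0 < Q i) {a : ℝ} (ha : 0 < a)
    (hlow : ∀ i, minRound γ (Q i * a) ≤ J i) (hup : ∀ i ≠ p, J i ≤ maxRound γ (Q i * a)) :
    ∃ s > 0, ∃ J' : ι → ℕ, ∑ i, J' i = ∑ i, J i ∧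
      (∀ i, minRound γ (Q i * s) ≤ J' i ∧ J' i ≤ maxRound γ (Q i * s)) ∧
      J' p ≤ J p ∧ ∀ i ≠ p, J i ≤ J' i := by
  set b := γ (J p + 1) / Q p
  have hQb : Q p * b = γ (J p + 1) := mul_div_cancel₀ _ (hQ p).ne'
  have hab : a ≤ b := (le_div_iff₀' (hQ p)).2 ((minRound_le_iff hmono hγ).1 (hlow p))
  have hpb : minRound γ (Q p * b) ≤ J p := (minRound_le_iff hmono hγ).2 hQb.le
  have hLa : ∑ i, lowerQuota γ Q p J a i ≤ ∑ i, J i := sum_le_sum fun i _ => by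
    unfold lowerQuota
    split_ifs
    exacts [hlow i, max_le (hlow i) le_rfl]
  have hUb : ∑ i, J i ≤ ∑ i, upperQuota γ Q p J b i := sum_le_sum fun i _ => by
    unfold upperQuota
    split_ifs with hi
    · subst hi
      refine le_min ((le_maxRound_iff hmono hγ ?_).2 (hQb ▸ hmono (Nat.le_succ _))) le_rfl
      exact hγ0 ▸ mul_pos (hQ i) (ha.trans_le hab) |>.le
    · exact (hup i hi).trans (maxRound_mono hmono hγ (mul_le_mul_of_nonneg_left hab (hQ i).le))
  obtain ⟨s, hs, hL, hU⟩ := exists_mem_Icc_le_and_le hab hLa hUb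
    (fun s hs => (eventually_upperQuota_le hmono hγ hγ0 hQ (ha.trans_le hs.1)).mono
      fun s' h => sum_le_sum fun i _ => h i)
    (fun s hs => (eventually_lowerQuota_le_upperQuota hmono hγ hγ0 hQ ha hs hpb hup).mono
      fun s' h hs' => sum_le_sum fun i _ => h hs' i)
  have hlohi := (eventually_lowerQuota_le_upperQuota hmono hγ hγ0 hQ ha hs hpb hup).self_of_nhds hs
  obtain ⟨J', hJ', hsum⟩ := exists_le_le_sum_eq univ (fun i _ => hlohi i) hL hU
  have hJ'i := fun i => hJ' i (mem_univ i)
  refine ⟨s, ha.trans_le hs.1, J', hsum, fun i => ⟨?_, ?_⟩, ?_, fun i hi => ?_⟩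
  · exact (minRound_le_lowerQuota s i).trans (hJ'i i).1
  · exact (hJ'i i).2.trans (upperQuota_le_maxRound s i)
  · exact (hJ'i p).2.trans (upperQuota_self_le s)
  · exact (le_lowerQuota s hi).trans (hJ'i i).1

end Transfer

theorem stmt2_general (γ : ℕ → ℝ) (hγ : Signpost γ) (n : ℕ) (h : ℕ)
    (Q Q' : Fin n → ℝ) (hQ' : ∀ i, 0 < Q' i)
    (p : Fin n) (hp : Q' p < Q p) (hoth : ∀ i, i ≠ p → Q i = Q' i)
    (J : Fin n → ℕ) (hJ : J ∈ divisorSet γ Q h) :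
    ∃ J' ∈ divisorSet γ Q' h, J' p ≤ J p ∧ ∀ i, i ≠ p → J i ≤ J' i := by
  have hmono := hγ.monotone
  have htend := hγ.tendsto_atTop
  have hQ'Q : ∀ i, Q' i ≤ Q i := fun i => by
    rcases eq_or_ne i p with rfl | hi
    exacts [hp.le, (hoth i hi).ge]
  have hQ : ∀ i, 0 < Q i := fun i => (hQ' i).trans_le (hQ'Q i)
  obtain ⟨hsum, a, ha, hJa⟩ := (mem_divisorSet_iff hmono htend hγ.1 hQ).1 hJ
  have hlow : ∀ i, minRound γ (Q' i * a) ≤ J i := fun i =>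
    (minRound_mono hmono htend (mul_le_mul_of_nonneg_right (hQ'Q i) ha.le)).trans (hJa i).1
  have hup : ∀ i ≠ p, J i ≤ maxRound γ (Q' i * a) := fun i hi => hoth i hi ▸ (hJa i).2
  obtain ⟨s, hs, J', hsum', hJ's, hJ'p, hJ'i⟩ :=
    exists_rounding_of_excess hmono htend hγ.1 hQ' ha hlow hup
  exact ⟨J', (mem_divisorSet_iff hmono htend hγ.1 hQ').2 ⟨hsum'.trans hsum, s, hs, hJ's⟩,
    hJ'p, hJ'i⟩

/-- strong vote monotonicity of divisor methods. -/
theorem stmt2 (γ : ℕ → ℝ) (hγ : Signpost γ) (n : ℕ) (h : ℕ) (hh : 1 ≤ h)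
    (Q Q' : Fin n → ℝ) (hQ : ∀ i, 0 < Q i) (hQ' : ∀ i, 0 < Q' i)
    (p : Fin n) (hp : Q' p < Q p) (hoth : ∀ i, i ≠ p → Q i = Q' i)
    (J : Fin n → ℕ) (hJ : J ∈ divisorSet γ Q h) :
    ∃ J' ∈ divisorSet γ Q' h, J' p ≤ J p ∧ ∀ i, i ≠ p → J i ≤ J' i :=
  stmt2_general γ hγ n h Q Q' hQ' p hp hoth J hJ
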